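/- Let G be a finite k-regular simple graph with mbt(G) = k (i.e., G is regular and dispersable). Then G is bipartite. -/

import Mathlib

/-
In a matching book embedding of a `k`-regular graph on `k` pages, the `k` edges at each vertex
lie on `k` distinct pages, so every page is a perfect matching. If `uv` is an edge on page `p`,
the page-`p` partner of a vertex strictly between `u` and `v` is again strictly between them
(otherwise two page-`p` edges would cross), so an even number of vertices lie between the
endpoints of every edge. Hence the parity of a vertex's position in the order is a proper
2-colouring.
-/

open SimpleGraph

/-- Degree of a vertex. -/
noncomputable def deg {V : Type*} (G : SimpleGraph V) (v : V) : ℕ :=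
  (G.neighborSet v).ncard

/-- Maximum degree Δ(G) of a finite simple graph. -/
noncomputable def maxDeg {V : Type*} [Fintype V] (G : SimpleGraph V) : ℕ :=
  Finset.univ.sup (deg G)

/-- `IsMBE G k f page` : the linear order on vertices given by the injection `f : V → ℕ`
together with the page assignment `page` is a matching book embedding of `G` on `k` pages:
every edge gets a page `< k`, no two edges on a common page cross, and every vertex is
incident to at most one edge on each page. -/
def IsMBE {V : Type*} (G : SimpleGraph V) (k : ℕ) (f : V → ℕ) (page : Sym2 V → ℕ) : Prop :=
  Function.Injective f ∧
  (∀ u v, G.Adj u v → page s(u, v) < k) ∧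
  (∀ u v x y, G.Adj u v → G.Adj x y → page s(u, v) = page s(x, y) →
    ¬(f u < f x ∧ f x < f v ∧ f v < f y)) ∧
  (∀ u v w, G.Adj u v → G.Adj u w → v ≠ w → page s(u, v) ≠ page s(u, w))

/-- The matching book thickness of `G`: the least number of pages admitting a
matching book embedding. -/
noncomputable def mbt {V : Type*} (G : SimpleGraph V) : ℕ :=
  sInf {k | ∃ f page, IsMBE G k f page}

/-- A graph is outerplanar iff it has a one-page book embedding: a linear order of
its vertices (an injection into `ℕ`) in which no two edges cross. -/
def IsOuterplanar {V : Type*} (G : SimpleGraph V) : Prop :=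
  ∃ f : V → ℕ, Function.Injective f ∧
    ∀ u v x y, G.Adj u v → G.Adj x y → ¬(f u < f x ∧ f x < f v ∧ f v < f y)

/-- The derived graph of `G` on vertex set `V(G) ⊕ E(G)`. Black–white edges
(`u`–`(uv)` for `u` an endpoint of the edge `uv`) are always present; `black` indicates
whether the original edges of `G` are retained, and `white` indicates whether two edge
vertices corresponding to adjacent edges of `G` (distinct edges sharing an endpoint)
are joined. -/
def derivedG {V : Type*} (G : SimpleGraph V) (black white : Bool) :
    SimpleGraph (V ⊕ G.edgeSet) where
  Adj x y :=
    match x, y with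
    | Sum.inl u, Sum.inl v => black = true ∧ G.Adj u v
    | Sum.inl u, Sum.inr e => u ∈ (e : Sym2 V)
    | Sum.inr e, Sum.inl u => u ∈ (e : Sym2 V)
    | Sum.inr e, Sum.inr f =>
        white = true ∧ e ≠ f ∧ ∃ w, w ∈ (e : Sym2 V) ∧ w ∈ (f : Sym2 V)
  symm := by
    constructor
    rintro (u | e) (v | f) h
    · exact ⟨h.1, h.2.symm⟩
    · exact h
    · exact h
    · obtain ⟨hw, hne, w, h1, h2⟩ := h
      exact ⟨hw, hne.symm, w, h2, h1⟩
  loopless := by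
    constructor
    rintro (u | e) h
    · exact G.loopless.irrefl u h.2
    · exact h.2.1 rfl

/-- The four graph operations `S`, `R`, `Q`, `T`. -/
inductive FOp : Type
  | S | R | Q | T
  deriving DecidableEq

/-- Whether the operation retains the original (black–black) edges of `G`. -/
def FOp.black : FOp → Bool
  | .R => true
  | .T => true
  | _ => false

/-- Whether the operation joins edge (white) vertices of adjacent edges. -/
def FOp.white : FOp → Bool
  | .Q => true
  | .T => true
  | _ => false

/-- `FGraph F G` is the graph `F(G)` for `F ∈ {S, R, Q, T}`. -/
def FGraph (F : FOp) {V : Type*} (G : SimpleGraph V) : SimpleGraph (V ⊕ G.edgeSet) :=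
  derivedG G F.black F.white

/-- The `F`-sum `G +_F H`: vertex set `(V(G) ∪ E(G)) × V(H)`; `(u₁, u₂)` and `(v₁, v₂)`
are adjacent iff `u₁ = v₁ ∈ V(G)` and `u₂v₂ ∈ E(H)`, or `u₂ = v₂` and
`u₁v₁ ∈ E(F(G))`. -/
def FSum (F : FOp) {V W : Type*} (G : SimpleGraph V) (H : SimpleGraph W) :
    SimpleGraph ((V ⊕ G.edgeSet) × W) where
  Adj x y :=
    (x.1 = y.1 ∧ (∃ u : V, x.1 = Sum.inl u) ∧ H.Adj x.2 y.2) ∨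
    (x.2 = y.2 ∧ (FGraph F G).Adj x.1 y.1)
  symm := by
    constructor
    rintro ⟨a, b⟩ ⟨c, d⟩ (⟨h1, h2, h3⟩ | ⟨h1, h2⟩)
    · exact Or.inl ⟨h1.symm, h1 ▸ h2, h3.symm⟩
    · exact Or.inr ⟨h1.symm, h2.symm⟩
  loopless := by
    constructor
    rintro ⟨a, b⟩ (⟨-, -, h⟩ | ⟨-, h⟩)
    · exact H.loopless.irrefl b h
    · exact (FGraph F G).loopless.irrefl a h

/-- The path graph `P_n` on `n` vertices. -/
def pathG (n : ℕ) : SimpleGraph (Fin n) where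
  Adj i j := (i : ℕ) + 1 = (j : ℕ) ∨ (j : ℕ) + 1 = (i : ℕ)
  symm := by constructor; intro i j h; tauto
  loopless := by constructor; intro i h; omega

instance (n : ℕ) : DecidableRel (pathG n).Adj := fun i j =>
  inferInstanceAs (Decidable (_ ∨ _))

/-- The cycle graph `C_n` on `n` vertices (intended for `n ≥ 3`). -/
def cycleG (n : ℕ) : SimpleGraph (Fin n) where
  Adj i j := i ≠ j ∧ (((i : ℕ) + 1) % n = (j : ℕ) ∨ ((j : ℕ) + 1) % n = (i : ℕ))
  symm := by constructor; intro i j h; tauto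
  loopless := by constructor; intro i h; exact h.1 rfl

instance (n : ℕ) : DecidableRel (cycleG n).Adj := fun i j =>
  inferInstanceAs (Decidable (_ ∧ _))

/-- The star graph `S_n = K_{1,n}` on `n + 1` vertices: vertex `0` is the center. -/
def starG (n : ℕ) : SimpleGraph (Fin (n + 1)) where
  Adj i j := i ≠ j ∧ (i = 0 ∨ j = 0)
  symm := by constructor; intro i j h; tauto
  loopless := by constructor; intro i h; exact h.1 rfl

instance (n : ℕ) : DecidableRel (starG n).Adj := fun i j =>
  inferInstanceAs (Decidable (_ ∧ _))

/-- The circulant graph `C(ℤ_m, {1, 2})`: vertices `0, …, m - 1`, with `i` adjacent to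
`j` iff `i - j ≡ ±1` or `±2 (mod m)`. -/
def circulantG12 (m : ℕ) : SimpleGraph (Fin m) where
  Adj i j := i ≠ j ∧
    (((i : ℕ) + 1) % m = (j : ℕ) ∨ ((i : ℕ) + 2) % m = (j : ℕ) ∨
     ((j : ℕ) + 1) % m = (i : ℕ) ∨ ((j : ℕ) + 2) % m = (i : ℕ))
  symm := by constructor; intro i j h; tauto
  loopless := by constructor; intro i h; exact h.1 rfl

open Finset Function

theorem Finset.even_card_of_involution {α : Type*} {s : Finset α} (g : α → α)
    (hg_ne : ∀ a ∈ s, g a ≠ a) (hg_mem : ∀ a ∈ s, g a ∈ s)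
    (hg_inv : ∀ a ∈ s, g (g a) = a) : Even #s := by
  have hsum : ∑ _a ∈ s, (1 : ZMod 2) = 0 :=
    sum_involution (fun a _ => g a) (fun _ _ => by decide) (fun a ha _ => hg_ne a ha)
      hg_mem hg_inv
  rw [sum_const, nsmul_one] at hsum
  exact ZMod.natCast_eq_zero_iff_even.mp hsum

theorem Finset.card_lt_eq_add_card_between {V : Type*} [Fintype V] {f : V → ℕ}
    (hf : Injective f) {u v : V} (huv : f u < f v) :
    #{w | f w < f v} = #{w | f w < f u} + #{w | f u < f w ∧ f w < f v} + 1 := by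
  classical
  have hsplit : ({w | f w < f v} : Finset V) =
      ({w | f w < f u} : Finset V) ∪ insert u ({w | f u < f w ∧ f w < f v} : Finset V) := by
    ext w
    obtain rfl | hwu := eq_or_ne w u
    · simpa using huv
    · have := hf.ne hwu
      simp only [mem_filter, mem_univ, true_and, mem_union, mem_insert, hwu, false_or]
      omega
  rw [hsplit, card_union_of_disjoint, card_insert_of_notMem, add_assoc]
  · simp
  · simp only [disjoint_left, mem_filter, mem_univ, true_and, mem_insert]
    rintro w hw (rfl | ⟨hw', -⟩) <;> omega

theorem exists_isMBE_mbt {V : Type*} [Fintype V] (G : SimpleGraph V) :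
    ∃ f page, IsMBE G (mbt G) f page := by
  classical
  let page : Sym2 V → ℕ := fun e => Fintype.equivFin (Sym2 V) e
  have hpage : Injective page := Fin.val_injective.comp (Fintype.equivFin _).injective
  refine Nat.sInf_mem (s := {k | ∃ f page, IsMBE G k f page}) ⟨Fintype.card (Sym2 V),
    fun v => Fintype.equivFin V v, page, Fin.val_injective.comp (Fintype.equivFin V).injective,
    fun u v _ => Fin.is_lt _, ?_, fun u v w _ _ hvw he => hvw (Sym2.congr_right.mp (hpage he))⟩
  intro u v x y _ _ he
  rcases Sym2.eq_iff.mp (hpage he) with ⟨rfl, rfl⟩ | ⟨rfl, rfl⟩ <;> omega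

namespace IsMBE

variable {V : Type*} {G : SimpleGraph V} {k : ℕ} {f : V → ℕ} {page : Sym2 V → ℕ}

theorem eq_of_page_eq (h : IsMBE G k f page) {u v w : V} (hv : G.Adj u v) (hw : G.Adj u w)
    (hvw : page s(u, v) = page s(u, w)) : v = w :=
  by_contra fun hne => h.2.2.2 u v w hv hw hne hvw

theorem exists_adj_page_eq (h : IsMBE G k f page) {w : V} (hw : k ≤ deg G w) {p : ℕ}
    (hp : p < k) : ∃ w', G.Adj w w' ∧ page s(w, w') = p := by
  have hinj : Set.InjOn (fun w' => page s(w, w')) (G.neighborSet w) :=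
    fun a ha b hb hab => h.eq_of_page_eq ha hb hab
  have hsub : (fun w' => page s(w, w')) '' G.neighborSet w ⊆ Set.Iio k := by
    rintro _ ⟨w', hw', rfl⟩
    exact h.2.1 w w' hw'
  have himage : (fun w' => page s(w, w')) '' G.neighborSet w = Set.Iio k :=
    Set.eq_of_subset_of_ncard_le hsub
      (by rwa [hinj.ncard_image, ← coe_range, Set.ncard_coe_finset, card_range])
      (Set.finite_Iio k)
  obtain ⟨w', hw', hpage⟩ := himage.symm.subset hp
  exact ⟨w', hw', hpage⟩

theorem even_card_between [Fintype V] (h : IsMBE G k f page) (hdeg : ∀ w, k ≤ deg G w)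
    {u v : V} (huv : G.Adj u v) : Even #{w | f u < f w ∧ f w < f v} := by
  choose m hm_adj hm_page using fun w => h.exists_adj_page_eq (hdeg w) (h.2.1 u v huv)
  have hm_unique {x y : V} (hxy : G.Adj x y) (hp : page s(x, y) = page s(u, v)) : y = m x :=
    h.eq_of_page_eq hxy (hm_adj x) (hp.trans (hm_page x).symm)
  have hm_inv (w : V) : m (m w) = w :=
    (hm_unique (hm_adj w).symm (by rw [Sym2.eq_swap, hm_page])).symm
  have hmu : m u = v := (hm_unique huv rfl).symm
  have hmv : m v = u := (hm_unique huv.symm (by rw [Sym2.eq_swap])).symm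
  refine even_card_of_involution m (fun w _ => (hm_adj w).ne') ?_ (fun w _ => hm_inv w)
  simp only [mem_filter, mem_univ, true_and]
  rintro w ⟨huw, hwv⟩
  have hne_u : f (m w) ≠ f u := fun e =>
    hwv.ne' (congrArg f (by rw [← hmu, ← h.1 e, hm_inv]))
  have hne_v : f (m w) ≠ f v := fun e =>
    huw.ne (congrArg f (by rw [← hmv, ← h.1 e, hm_inv]))
  have hgt_u : ¬f (m w) < f u := fun hlt =>
    h.2.2.1 (m w) w u v (hm_adj w).symm huv (by rw [Sym2.eq_swap, hm_page]) ⟨hlt, huw, hwv⟩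
  have hlt_v : ¬f v < f (m w) := fun hlt =>
    h.2.2.1 u v w (m w) huv (hm_adj w) (hm_page w).symm ⟨huw, hwv, hlt⟩
  omega

theorem natCast_card_lt_ne [Fintype V] (h : IsMBE G k f page) (hdeg : ∀ w, k ≤ deg G w)
    {u v : V} (huv : G.Adj u v) : (#{w | f w < f u} : ZMod 2) ≠ #{w | f w < f v} := by
  wlog hlt : f u < f v generalizing u v
  · exact (this huv.symm ((not_lt.mp hlt).lt_of_ne (h.1.ne huv.ne).symm)).symm
  rw [card_lt_eq_add_card_between h.1 hlt, Nat.cast_add, Nat.cast_add,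
    (h.even_card_between hdeg huv).natCast_zmod_two]
  simp

end IsMBE

/-- A finite `k`-regular simple graph with `mbt(G) = k` (a regular
dispersable graph) is bipartite. -/
theorem regular_dispersable_bipartite {V : Type*} [Fintype V] (G : SimpleGraph V)
    (k : ℕ) (hreg : ∀ v : V, deg G v = k) (hdisp : mbt G = k) :
    G.Colorable 2 := by
  obtain ⟨f, page, h⟩ := exists_isMBE_mbt G
  rw [hdisp] at h
  exact (Coloring.mk (fun v => (#{w | f w < f v} : ZMod 2))
    fun huv => h.natCast_card_lt_ne (fun w => (hreg w).ge) huv).colorable
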